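/- The image A(U) := {Ay : y ∈ U} is relatively compact in the Banach space C([0, h], ℝ) of continuous real-valued functions on [0, h] equipped with the supremum (Chebyshev) norm; i.e., the closure of A(U) in C([0, h], ℝ) is compact. -/

import Mathlib

/-!
Arzelà–Ascoli. With `k s t = (s - t ^ ρ) ^ (α - 1) * t ^ (ρ - 1)`, the map
`t ↦ -(s - t ^ ρ) ^ α / (ρ α)` is a primitive of `k s`, and for `s₁ ≤ s₂` the difference
`k s₂ - k s₁` has the sign of `α - 1` wherever `0 < t` and `t ^ ρ < s₁`. For `0 ≤ x₁ ≤ x₂` and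
`ψ = f (·, y ·)`, split the difference of the two integrals as
`∫₀^{x₁} (k (x₂ ^ ρ) - k (x₁ ^ ρ)) ψ + ∫_{x₁}^{x₂} k (x₂ ^ ρ) ψ`; since `|ψ| ≤ M` and both kernels
have constant sign, each term is at most `M` times an explicit integral. This gives
`M / (ρ α) * (|x₂ ^ (ρ α) - x₁ ^ (ρ α)| + 2 (x₂ ^ ρ - x₁ ^ ρ) ^ α)`, a modulus of continuity shared
by every `A y`, which also bounds `A y` pointwise because `A y 0 = T 0`.
-/

open Set MeasureTheory intervalIntegral Filter Topology

noncomputable def katugampolaKernel (ρ α s t : ℝ) : ℝ := (s - t ^ ρ) ^ (α - 1) * t ^ (ρ - 1)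

noncomputable def katugampolaIntegral (ρ α : ℝ) (ψ : ℝ → ℝ) (x : ℝ) : ℝ :=
  ρ ^ (1 - α) / Real.Gamma α * ∫ t in (0 : ℝ)..x, katugampolaKernel ρ α (x ^ ρ) t * ψ t

variable {ρ α s a b : ℝ}

theorem hasDerivAt_neg_sub_rpow_rpow_div {t : ℝ} (hρ : ρ ≠ 0) (hα : α ≠ 0) (ht : 0 < t)
    (hts : t ^ ρ < s) :
    HasDerivAt (fun t => -(s - t ^ ρ) ^ α / (ρ * α)) (katugampolaKernel ρ α s t) t := by
  refine ((((Real.hasDerivAt_rpow_const (Or.inl ht.ne')).const_sub s).rpow_const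
    (Or.inl (sub_pos.2 hts).ne')).fun_neg.div_const (ρ * α)).congr_deriv ?_
  rw [katugampolaKernel]
  field_simp

theorem continuous_neg_sub_rpow_rpow_div (hρ : 0 ≤ ρ) (hα : 0 ≤ α) (s : ℝ) :
    Continuous (fun t : ℝ => -(s - t ^ ρ) ^ α / (ρ * α)) := by
  fun_prop (disch := assumption)

theorem pos_and_rpow_lt_of_mem_Ioo (hρ : 0 < ρ) (ha : 0 ≤ a) (hbs : b ^ ρ ≤ s) {t : ℝ}
    (ht : t ∈ Ioo a b) : 0 < t ∧ t ^ ρ < s :=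
  ⟨ha.trans_lt ht.1, (Real.rpow_lt_rpow (ha.trans ht.1.le) ht.2 hρ).trans_le hbs⟩

theorem katugampolaKernel_nonneg {t : ℝ} (ht : 0 < t) (hts : t ^ ρ < s) :
    0 ≤ katugampolaKernel ρ α s t := by
  have := sub_pos.2 hts
  rw [katugampolaKernel]
  positivity

theorem katugampolaKernel_le_of_one_le {s₁ s₂ t : ℝ} (hα : 1 ≤ α) (ht : 0 < t)
    (hts : t ^ ρ < s₁) (h12 : s₁ ≤ s₂) :
    katugampolaKernel ρ α s₁ t ≤ katugampolaKernel ρ α s₂ t :=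
  mul_le_mul_of_nonneg_right
    (Real.rpow_le_rpow (sub_nonneg.2 hts.le) (by linarith) (by linarith)) (by positivity)

theorem katugampolaKernel_le_of_le_one {s₁ s₂ t : ℝ} (hα : α ≤ 1) (ht : 0 < t)
    (hts : t ^ ρ < s₁) (h12 : s₁ ≤ s₂) :
    katugampolaKernel ρ α s₂ t ≤ katugampolaKernel ρ α s₁ t :=
  mul_le_mul_of_nonneg_right
    (Real.rpow_le_rpow_of_nonpos (sub_pos.2 hts) (by linarith) (by linarith)) (by positivity)

theorem intervalIntegrable_katugampolaKernel (hρ : 0 < ρ) (hα : 0 < α) (ha : 0 ≤ a)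
    (hab : a ≤ b) (hbs : b ^ ρ ≤ s) :
    IntervalIntegrable (katugampolaKernel ρ α s) volume a b := by
  refine (intervalIntegrable_iff_integrableOn_Ioc_of_le hab).2 <|
    integrableOn_deriv_of_nonneg (continuous_neg_sub_rpow_rpow_div hρ.le hα.le s).continuousOn
      (fun t ht => (pos_and_rpow_lt_of_mem_Ioo hρ ha hbs ht).elim
        (hasDerivAt_neg_sub_rpow_rpow_div hρ.ne' hα.ne'))
      fun t ht => (pos_and_rpow_lt_of_mem_Ioo hρ ha hbs ht).elim katugampolaKernel_nonneg

theorem integral_katugampolaKernel (hρ : 0 < ρ) (hα : 0 < α) (ha : 0 ≤ a) (hab : a ≤ b)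
    (hbs : b ^ ρ ≤ s) :
    ∫ t in a..b, katugampolaKernel ρ α s t = ((s - a ^ ρ) ^ α - (s - b ^ ρ) ^ α) / (ρ * α) := by
  rw [integral_eq_sub_of_hasDerivAt_of_le hab
    (continuous_neg_sub_rpow_rpow_div hρ.le hα.le s).continuousOn
    (fun t ht => (pos_and_rpow_lt_of_mem_Ioo hρ ha hbs ht).elim
      (hasDerivAt_neg_sub_rpow_rpow_div hρ.ne' hα.ne'))
    (intervalIntegrable_katugampolaKernel hρ hα ha hab hbs)]
  ring

theorem abs_integral_mul_le_of_nonneg {k ψ : ℝ → ℝ} {M : ℝ} (hab : a ≤ b)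
    (hk : IntervalIntegrable k volume a b) (hk0 : ∀ t ∈ Ioo a b, 0 ≤ k t)
    (hψ : ∀ t ∈ Ioo a b, |ψ t| ≤ M) :
    |∫ t in a..b, k t * ψ t| ≤ M * ∫ t in a..b, k t := by
  have hae : ∀ᵐ t ∂volume.restrict (Ioc a b), ‖k t * ψ t‖ ≤ M * k t := by
    rw [Measure.restrict_congr_set Ioo_ae_eq_Ioc.symm]
    filter_upwards [ae_restrict_mem measurableSet_Ioo] with t ht
    rw [Real.norm_eq_abs, abs_mul, abs_of_nonneg (hk0 t ht), mul_comm]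
    exact mul_le_mul_of_nonneg_right (hψ t ht) (hk0 t ht)
  rw [← intervalIntegral.integral_const_mul]
  exact norm_integral_le_of_norm_le hab ((ae_restrict_iff' measurableSet_Ioc).1 hae)
    (hk.const_mul M)

theorem abs_integral_mul_le_of_nonneg_or_nonpos {k ψ : ℝ → ℝ} {M : ℝ} (hM : 0 ≤ M)
    (hab : a ≤ b) (hk : IntervalIntegrable k volume a b)
    (hk0 : (∀ t ∈ Ioo a b, 0 ≤ k t) ∨ ∀ t ∈ Ioo a b, k t ≤ 0)
    (hψ : ∀ t ∈ Ioo a b, |ψ t| ≤ M) :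
    |∫ t in a..b, k t * ψ t| ≤ M * |∫ t in a..b, k t| := by
  rcases hk0 with hk0 | hk0
  · exact (abs_integral_mul_le_of_nonneg hab hk hk0 hψ).trans
      (mul_le_mul_of_nonneg_left (le_abs_self _) hM)
  · have h := abs_integral_mul_le_of_nonneg hab hk.neg (fun t ht => neg_nonneg.2 (hk0 t ht)) hψ
    simp only [Pi.neg_apply, neg_mul, intervalIntegral.integral_neg, abs_neg] at h
    exact h.trans (mul_le_mul_of_nonneg_left (neg_le_abs _) hM)

theorem abs_integral_katugampolaKernel_sub_mul_le {ψ : ℝ → ℝ} {M x : ℝ} (hρ : 0 < ρ)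
    (hα : 0 < α) (hM : 0 ≤ M) (hx : 0 ≤ x) (hxs : x ^ ρ ≤ s) (hψ : ∀ t ∈ Ioo 0 x, |ψ t| ≤ M) :
    |∫ t in (0 : ℝ)..x, (katugampolaKernel ρ α s t - katugampolaKernel ρ α (x ^ ρ) t) * ψ t| ≤
      M / (ρ * α) * (|s ^ α - (x ^ ρ) ^ α| + (s - x ^ ρ) ^ α) := by
  have hk₁ := intervalIntegrable_katugampolaKernel hρ hα le_rfl hx (le_refl (x ^ ρ))
  have hk₂ := intervalIntegrable_katugampolaKernel hρ hα le_rfl hx hxs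
  have hsign : (∀ t ∈ Ioo 0 x, 0 ≤ katugampolaKernel ρ α s t - katugampolaKernel ρ α (x ^ ρ) t) ∨
      ∀ t ∈ Ioo 0 x, katugampolaKernel ρ α s t - katugampolaKernel ρ α (x ^ ρ) t ≤ 0 := by
    rcases le_total 1 α with h1 | h1
    · refine Or.inl fun t ht => sub_nonneg.2 ?_
      obtain ⟨ht0, hts⟩ := pos_and_rpow_lt_of_mem_Ioo hρ le_rfl (le_refl (x ^ ρ)) ht
      exact katugampolaKernel_le_of_one_le h1 ht0 hts hxs
    · refine Or.inr fun t ht => sub_nonpos.2 ?_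
      obtain ⟨ht0, hts⟩ := pos_and_rpow_lt_of_mem_Ioo hρ le_rfl (le_refl (x ^ ρ)) ht
      exact katugampolaKernel_le_of_le_one h1 ht0 hts hxs
  refine (abs_integral_mul_le_of_nonneg_or_nonpos hM hx (hk₂.sub hk₁) hsign hψ).trans ?_
  rw [integral_sub hk₂ hk₁, integral_katugampolaKernel hρ hα le_rfl hx hxs,
    integral_katugampolaKernel hρ hα le_rfl hx le_rfl, Real.zero_rpow hρ.ne', sub_self,
    Real.zero_rpow hα.ne']
  simp only [sub_zero]
  rw [← sub_div, abs_div, abs_of_pos (mul_pos hρ hα), sub_right_comm, mul_div_assoc',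
    div_mul_eq_mul_div]
  gcongr
  exact (abs_sub _ _).trans_eq (by rw [abs_of_nonneg (a := (s - x ^ ρ) ^ α) (by positivity)])

theorem abs_integral_katugampolaKernel_mul_sub_le {ψ : ℝ → ℝ} {M x₁ x₂ : ℝ} (hρ : 0 < ρ)
    (hα : 0 < α) (hM : 0 ≤ M) (hx₁ : 0 ≤ x₁) (h12 : x₁ ≤ x₂) (hψc : ContinuousOn ψ (Icc 0 x₂))
    (hψ : ∀ t ∈ Icc 0 x₂, |ψ t| ≤ M) :
    |(∫ t in (0 : ℝ)..x₂, katugampolaKernel ρ α (x₂ ^ ρ) t * ψ t) -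
        ∫ t in (0 : ℝ)..x₁, katugampolaKernel ρ α (x₁ ^ ρ) t * ψ t| ≤
      M / (ρ * α) * (|(x₂ ^ ρ) ^ α - (x₁ ^ ρ) ^ α| + 2 * (x₂ ^ ρ - x₁ ^ ρ) ^ α) := by
  have hs : x₁ ^ ρ ≤ x₂ ^ ρ := Real.rpow_le_rpow hx₁ h12 hρ.le
  have hIcc₁ : Icc 0 x₁ ⊆ Icc 0 x₂ := Icc_subset_Icc le_rfl h12
  have hIcc₂ : Icc x₁ x₂ ⊆ Icc 0 x₂ := Icc_subset_Icc hx₁ le_rfl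
  have hψc₁ : ContinuousOn ψ (uIcc 0 x₁) := hψc.mono (uIcc_of_le hx₁ ▸ hIcc₁)
  have hψc₂ : ContinuousOn ψ (uIcc x₁ x₂) := hψc.mono (uIcc_of_le h12 ▸ hIcc₂)
  have hk₂ := intervalIntegrable_katugampolaKernel hρ hα le_rfl hx₁ hs
  have hk₁ := intervalIntegrable_katugampolaKernel hρ hα le_rfl hx₁ (le_refl (x₁ ^ ρ))
  have hk₂' := intervalIntegrable_katugampolaKernel hρ hα hx₁ h12 (le_refl (x₂ ^ ρ))
  have head := abs_integral_katugampolaKernel_sub_mul_le hρ hα hM hx₁ hs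
    fun t ht => hψ t (hIcc₁ (Ioo_subset_Icc_self ht))
  have tail := abs_integral_mul_le_of_nonneg h12 hk₂'
    (fun t ht => (pos_and_rpow_lt_of_mem_Ioo hρ hx₁ le_rfl ht).elim katugampolaKernel_nonneg)
    fun t ht => hψ t (hIcc₂ (Ioo_subset_Icc_self ht))
  rw [integral_katugampolaKernel hρ hα hx₁ h12 le_rfl, sub_self, Real.zero_rpow hα.ne',
    sub_zero] at tail
  simp only [sub_mul] at head
  rw [integral_sub (hk₂.mul_continuousOn hψc₁) (hk₁.mul_continuousOn hψc₁)] at head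
  rw [← integral_add_adjacent_intervals (hk₂.mul_continuousOn hψc₁)
    (hk₂'.mul_continuousOn hψc₂), add_sub_right_comm]
  calc _ ≤ _ := abs_add_le _ _
    _ ≤ _ := add_le_add head tail
    _ = _ := by ring

theorem abs_katugampolaIntegral_sub_le {ψ : ℝ → ℝ} {M h x₁ x₂ : ℝ} (hρ : 0 < ρ) (hα : 0 < α)
    (hM : 0 ≤ M) (hψc : ContinuousOn ψ (Icc 0 h)) (hψ : ∀ t ∈ Icc 0 h, |ψ t| ≤ M)
    (hx₁ : x₁ ∈ Icc 0 h) (hx₂ : x₂ ∈ Icc 0 h) :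
    |katugampolaIntegral ρ α ψ x₂ - katugampolaIntegral ρ α ψ x₁| ≤
      |ρ ^ (1 - α) / Real.Gamma α| * (M / (ρ * α)) *
        (|(x₂ ^ ρ) ^ α - (x₁ ^ ρ) ^ α| + 2 * |x₂ ^ ρ - x₁ ^ ρ| ^ α) := by
  wlog h12 : x₁ ≤ x₂ generalizing x₁ x₂
  · rw [abs_sub_comm, abs_sub_comm ((x₂ ^ ρ) ^ α), abs_sub_comm (x₂ ^ ρ)]
    exact this hx₂ hx₁ (le_of_not_ge h12)
  have hIcc : Icc 0 x₂ ⊆ Icc 0 h := Icc_subset_Icc le_rfl hx₂.2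
  rw [katugampolaIntegral, katugampolaIntegral, ← mul_sub, abs_mul, mul_assoc,
    abs_of_nonneg (sub_nonneg.2 (Real.rpow_le_rpow hx₁.1 h12 hρ.le))]
  exact mul_le_mul_of_nonneg_left (abs_integral_katugampolaKernel_mul_sub_le hρ hα hM hx₁.1 h12
    (hψc.mono hIcc) fun t ht => hψ t (hIcc ht)) (abs_nonneg _)

theorem isCompact_setOf_mem_Icc_abs_sub_le {T : ℝ → ℝ} (hT : Continuous T) (a b K : ℝ) :
    IsCompact {p : ℝ × ℝ | p.1 ∈ Icc a b ∧ |p.2 - T p.1| ≤ K} := by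
  have : {p : ℝ × ℝ | p.1 ∈ Icc a b ∧ |p.2 - T p.1| ≤ K} =
      (fun q : ℝ × ℝ => (q.1, q.2 + T q.1)) '' (Icc a b ×ˢ Icc (-K) K) := by
    ext ⟨x, y⟩
    simp only [mem_ofPred_eq, mem_image, mem_prod, Prod.exists, Prod.mk.injEq, abs_le]
    constructor
    · rintro ⟨hx, hy⟩
      exact ⟨x, y - T x, ⟨hx, hy⟩, rfl, sub_add_cancel y (T x)⟩
    · rintro ⟨x, y, ⟨hx, hy⟩, rfl, rfl⟩
      simpa using ⟨hx, hy⟩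
  rw [this]
  exact (isCompact_Icc.prod isCompact_Icc).image (by fun_prop)

section Modulus

variable {X : Type*}

theorem isClosed_setOf_abs_le_and_abs_sub_le (B : X → ℝ) (Ω : X → X → ℝ) :
    IsClosed {F : X → ℝ | ∀ x, |F x| ≤ B x ∧ ∀ x₀, |F x - F x₀| ≤ Ω x₀ x} := by
  simp only [ofPred_forall, ofPred_and]
  exact isClosed_iInter fun x => (isClosed_le (continuous_apply x).abs continuous_const).inter <|
    isClosed_iInter fun x₀ =>
      isClosed_le ((continuous_apply x).sub (continuous_apply x₀)).abs continuous_const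

theorem isCompact_setOf_abs_le_and_abs_sub_le (B : X → ℝ) (Ω : X → X → ℝ) :
    IsCompact {F : X → ℝ | ∀ x, |F x| ≤ B x ∧ ∀ x₀, |F x - F x₀| ≤ Ω x₀ x} :=
  (isCompact_univ_pi fun _ => isCompact_Icc).of_isClosed_subset
    (isClosed_setOf_abs_le_and_abs_sub_le B Ω) fun _ hF => mem_univ_pi.2 fun x => abs_le.1 (hF x).1

variable [TopologicalSpace X] {Ω : X → X → ℝ}

theorem equicontinuous_of_abs_sub_le {ι : Type*} {F : ι → X → ℝ}
    (hΩ : ∀ x₀, Tendsto (Ω x₀) (𝓝 x₀) (𝓝 0)) (hF : ∀ i x x₀, |F i x - F i x₀| ≤ Ω x₀ x) :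
    Equicontinuous F := by
  intro x₀
  rw [Metric.equicontinuousAt_iff_right]
  intro ε hε
  filter_upwards [(hΩ x₀).eventually (gt_mem_nhds hε)] with x hx i
  rw [Real.dist_eq, abs_sub_comm]
  exact (hF i x x₀).trans_lt hx

theorem ContinuousMap.isCompact_closure_of_abs_le_of_abs_sub_le {S : Set C(X, ℝ)} (B : X → ℝ)
    (hΩ : ∀ x₀, Tendsto (Ω x₀) (𝓝 x₀) (𝓝 0))
    (hS : ∀ g ∈ S, ∀ x, |g x| ≤ B x ∧ ∀ x₀, |g x - g x₀| ≤ Ω x₀ x) :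
    IsCompact (closure S) := by
  set P := {F : X → ℝ | ∀ x, |F x| ≤ B x ∧ ∀ x₀, |F x - F x₀| ≤ Ω x₀ x}
  have hP : ContinuousMap.toFun '' ((⇑) ⁻¹' P) = P := by
    refine image_preimage_eq_of_subset fun F hF => ?_
    exact ⟨⟨F, (equicontinuous_of_abs_sub_le hΩ fun (_ : Unit) x => (hF x).2).continuous ()⟩, rfl⟩
  have hPc : IsCompact ((⇑) ⁻¹' P : Set C(X, ℝ)) :=
    ArzelaAscoli.isCompact_of_equicontinuous _
      (by rw [hP]; exact isCompact_setOf_abs_le_and_abs_sub_le B Ω)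
      (equicontinuous_of_abs_sub_le hΩ fun g x => (g.2 x).2)
  exact hPc.of_isClosed_subset isClosed_closure <| closure_minimal hS <|
    (isClosed_setOf_abs_le_and_abs_sub_le B Ω).preimage continuous_coeFun

end Modulus

theorem stmt12_general
    (ρ α : ℝ) (hρ : 0 < ρ) (hα : 0 < α)
    (m : ℕ)
    (y₀ : ℕ → ℝ) (K hstar : ℝ)
    (T : ℝ → ℝ)
    (hT : ∀ x : ℝ, T x = ∑ k ∈ Finset.range m, x ^ k / (Nat.factorial k) * y₀ k)
    (f : ℝ → ℝ → ℝ)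
    (G : Set (ℝ × ℝ))
    (hG : G = {p : ℝ × ℝ | p.1 ∈ Set.Icc 0 hstar ∧ |p.2 - T p.1| ≤ K})
    (hf : ContinuousOn (fun p : ℝ × ℝ => f p.1 p.2) G)
    (M : ℝ) (hM : M = sSup ((fun p : ℝ × ℝ => |f p.1 p.2|) '' G))
    (h : ℝ)
    (hh : h = if M = 0 then hstar
      else min hstar ((K * Real.Gamma (α + 1) * ρ ^ α / M) ^ (1 / α)))
    (A : (ℝ → ℝ) → ℝ → ℝ)
    (hA : ∀ (y : ℝ → ℝ) (x : ℝ), A y x = T x + ρ ^ (1 - α) / Real.Gamma α *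
      ∫ t in (0:ℝ)..x, (x ^ ρ - t ^ ρ) ^ (α - 1) * t ^ (ρ - 1) * f t (y t))
    :
    IsCompact (closure {g : C(Set.Icc (0:ℝ) h, ℝ) | ∃ y : ℝ → ℝ,
      (ContinuousOn y (Set.Icc 0 h) ∧ ∀ s ∈ Set.Icc 0 h, |y s - T s| ≤ K) ∧
      ∀ t : Set.Icc (0:ℝ) h, g t = A y t}) := by
  have hTc : Continuous T := by rw [funext hT]; fun_prop
  have hGc : IsCompact G := hG ▸ isCompact_setOf_mem_Icc_abs_sub_le hTc 0 hstar K
  have hfM : ∀ p ∈ G, |f p.1 p.2| ≤ M := fun p hp =>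
    hM ▸ le_csSup (hGc.image_of_continuousOn hf.abs).bddAbove ⟨p, hp, rfl⟩
  have hM0 : 0 ≤ M := hM ▸ Real.sSup_nonneg (by rintro _ ⟨p, -, rfl⟩; exact abs_nonneg _)
  have hhs : h ≤ hstar := by rw [hh]; split_ifs <;> simp
  set ω : ℝ → ℝ → ℝ := fun a b => |T b - T a| + |ρ ^ (1 - α) / Real.Gamma α| * (M / (ρ * α)) *
    (|(b ^ ρ) ^ α - (a ^ ρ) ^ α| + 2 * |b ^ ρ - a ^ ρ| ^ α)
  have hω : ∀ a, Continuous (ω a) := fun a => by fun_prop (disch := positivity)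
  have hmod : ∀ y : ℝ → ℝ, (ContinuousOn y (Icc 0 h) ∧ ∀ s ∈ Icc 0 h, |y s - T s| ≤ K) →
      ∀ a ∈ Icc 0 h, ∀ b ∈ Icc 0 h, |A y b - A y a| ≤ ω a b := by
    rintro y ⟨hyc, hyK⟩ a ha b hb
    have hyG : MapsTo (fun t => (t, y t)) (Icc 0 h) G := fun t ht =>
      hG ▸ ⟨⟨ht.1, ht.2.trans hhs⟩, hyK t ht⟩
    rw [hA, hA, add_sub_add_comm]
    exact (abs_add_le _ _).trans (add_le_add le_rfl (abs_katugampolaIntegral_sub_le hρ hα hM0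
      (hf.comp (continuousOn_id.prodMk hyc) hyG) (fun t ht => hfM _ (hyG ht)) ha hb))
  refine ContinuousMap.isCompact_closure_of_abs_le_of_abs_sub_le
    (fun x : Icc (0 : ℝ) h => |T 0| + ω 0 x) (Ω := fun a b : Icc (0 : ℝ) h => ω a b)
    (fun a => ((hω a).comp continuous_subtype_val).tendsto' a 0
      (by simp [ω, Real.zero_rpow hα.ne'])) ?_
  rintro g ⟨y, hy, hg⟩ x
  have hA0 : A y 0 = T 0 := by simp [hA]
  have hx := hmod y hy 0 ⟨le_rfl, x.2.1.trans x.2.2⟩ x x.2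
  rw [hA0] at hx
  simp only [hg]
  exact ⟨by linarith [abs_sub_abs_le_abs_sub (A y x) (T 0)], fun x₀ => hmod y hy _ x₀.2 _ x.2⟩

theorem stmt12
    (ρ α : ℝ) (hρ : 0 < ρ) (hα : 0 < α)
    (m : ℕ) (hm : m = ⌈α⌉₊)
    (y₀ : ℕ → ℝ) (K hstar : ℝ) (hK : 0 < K) (hhstar : 0 < hstar)
    (T : ℝ → ℝ)
    (hT : ∀ x : ℝ, T x = ∑ k ∈ Finset.range m, x ^ k / (Nat.factorial k) * y₀ k)
    (f : ℝ → ℝ → ℝ)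
    (G : Set (ℝ × ℝ))
    (hG : G = {p : ℝ × ℝ | p.1 ∈ Set.Icc 0 hstar ∧ |p.2 - T p.1| ≤ K})
    (hf : ContinuousOn (fun p : ℝ × ℝ => f p.1 p.2) G)
    (M : ℝ) (hM : M = sSup ((fun p : ℝ × ℝ => |f p.1 p.2|) '' G))
    (h : ℝ)
    (hh : h = if M = 0 then hstar
      else min hstar ((K * Real.Gamma (α + 1) * ρ ^ α / M) ^ (1 / α)))
    (A : (ℝ → ℝ) → ℝ → ℝ)
    (hA : ∀ (y : ℝ → ℝ) (x : ℝ), A y x = T x + ρ ^ (1 - α) / Real.Gamma α *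
      ∫ t in (0:ℝ)..x, (x ^ ρ - t ^ ρ) ^ (α - 1) * t ^ (ρ - 1) * f t (y t))
    :
    IsCompact (closure {g : C(Set.Icc (0:ℝ) h, ℝ) | ∃ y : ℝ → ℝ,
      (ContinuousOn y (Set.Icc 0 h) ∧ ∀ s ∈ Set.Icc 0 h, |y s - T s| ≤ K) ∧
      ∀ t : Set.Icc (0:ℝ) h, g t = A y t}) :=
  stmt12_general ρ α hρ hα m y₀ K hstar T hT f G hG hf M hM h hh A hA
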